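/- arXiv:1510.02800 — 4 statements merged into one kernel-verified Lean document; each statement's English description precedes it below -/
import Mathlib

section
/- A finite simple graph G is 3-colorable if and only if there exists a Hermitian positive semidefinite complex matrix A, with rows and columns indexed by the vertices of Δ(G'), such that rank(A) ≤ 3 and A fits Δ(G'). -/
open Matrix
open scoped ComplexOrder

/-- Vertices of the graph `G'`: the original vertices of `G` together with, for every
pair `{i,j}` of distinct vertices (represented as `i < j`), four new gadget vertices
`a_{ij}, b_{ij}, c_{ij}, d_{ij}` encoded as `Fin 4` (`0 = a`, `1 = b`, `2 = c`, `3 = d`). -/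
abbrev GVert (n : ℕ) := Fin n ⊕ ({p : Fin n × Fin n // p.1 < p.2} × Fin 4)

/-- The edges of `G'`: the original edges of `G`, and for every pair `i < j` the nine
gadget edges `{i,a},{i,b},{i,d},{a,b},{a,j},{b,c},{c,d},{c,j},{d,j}`. -/
def gadgetRel {n : ℕ} (G : SimpleGraph (Fin n)) : GVert n → GVert n → Prop
  | Sum.inl i, Sum.inl j => G.Adj i j
  | Sum.inl v, Sum.inr (⟨(i, j), _⟩, k) =>
      (v = i ∧ (k = 0 ∨ k = 1 ∨ k = 3)) ∨ (v = j ∧ (k = 0 ∨ k = 2 ∨ k = 3))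
  | Sum.inr (p, k), Sum.inr (q, l) =>
      p = q ∧ ((k = 0 ∧ l = 1) ∨ (k = 1 ∧ l = 2) ∨ (k = 2 ∧ l = 3))
  | _, _ => False

/-- The graph `G'` obtained from `G` by inserting the gadget `H_{ij}` for every pair of
distinct vertices `i, j` of `G`. -/
def gadgetGraph {n : ℕ} (G : SimpleGraph (Fin n)) : SimpleGraph (GVert n) :=
  SimpleGraph.fromRel (gadgetRel G)

/-- The triangle decoration `Δ(H)` of a graph `H`: each vertex `w` becomes the triangle
`(w,1),(w,2),(w,3)` (here `(w,0),(w,1),(w,2)`), with `(w,0)` identified with `w`. -/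
def triDec {W : Type*} (H : SimpleGraph W) : SimpleGraph (W × Fin 3) :=
  SimpleGraph.fromRel fun a b =>
    (a.2 = 0 ∧ b.2 = 0 ∧ H.Adj a.1 b.1) ∨ (a.1 = b.1 ∧ a.2 ≠ b.2)

/-- A matrix `A` fits a graph `H` if all its diagonal entries are `1` and `A v w = 0`
whenever `{v,w}` is an edge of `H`. -/
def Fits {V R : Type*} [Zero R] [One R] (H : SimpleGraph V) (A : Matrix V V R) : Prop :=
  (∀ v, A v v = 1) ∧ ∀ v w, H.Adj v w → A v w = 0

/-!
A 3-colouring `c` of `G` extends to `G'` (each gadget can be coloured compatibly with any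
colours of `i` and `j`) and then to `Δ(G')` by `(w, k) ↦ c w + k`; the Gram matrix of the
standard basis vectors `e_{c v}` of `ℂ³` is a positive semidefinite fit of rank at most `3`.

Conversely, a positive semidefinite fit of rank at most `3` is the Gram matrix of unit vectors
in a space of dimension at most `3`, orthogonal along the edges of `G'`. In dimension `3` the
gadget `H_{ij}` forces the vectors of `i` and `j` to be orthogonal or parallel. Colouring each
vertex of `G` by the line spanned by its vector is then proper, and pairwise orthogonal lines
number at most `3`.
-/

open Module Submodule
open scoped InnerProductSpace

lemma linearIndependent_pair_of_span_singleton_ne {K V : Type*} [Field K] [AddCommGroup V]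
    [Module K V] {x y : V} (hx : x ≠ 0) (hy : y ≠ 0) (hxy : K ∙ x ≠ K ∙ y) :
    LinearIndependent K ![x, y] :=
  (LinearIndependent.pair_iff' hx).2 fun a ha => hxy <| by
    rw [← ha, span_singleton_smul_eq (IsUnit.mk0 a (by rintro rfl; simp [← ha] at hy))]

section InnerProductSpace

variable {𝕜 E : Type*} [RCLike 𝕜] [NormedAddCommGroup E] [InnerProductSpace 𝕜 E]

lemma mem_span_singleton_of_orthogonal_pair [FiniteDimensional 𝕜 E] (hE : finrank 𝕜 E ≤ 3)
    {x y z w : E} (hxy : LinearIndependent 𝕜 ![x, y]) (hz : z ≠ 0)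
    (hxz : ⟪x, z⟫_𝕜 = 0) (hyz : ⟪y, z⟫_𝕜 = 0) (hxw : ⟪x, w⟫_𝕜 = 0) (hyw : ⟪y, w⟫_𝕜 = 0) :
    w ∈ 𝕜 ∙ z := by
  set K := 𝕜 ∙ x ⊔ 𝕜 ∙ y
  have hK : finrank 𝕜 K = 2 := by
    have := finrank_span_eq_card hxy
    rwa [Matrix.range_cons, Matrix.range_cons, Matrix.range_empty, Set.union_empty,
      Set.union_singleton, Set.pair_comm, span_insert, Fintype.card_fin] at this
  have hKperp : finrank 𝕜 Kᗮ ≤ 1 := by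
    have := K.finrank_add_finrank_orthogonal
    omega
  have mem : ∀ {v}, ⟪x, v⟫_𝕜 = 0 → ⟪y, v⟫_𝕜 = 0 → v ∈ Kᗮ := fun hx hy => by
    rw [← inf_orthogonal]
    exact ⟨mem_orthogonal_singleton_iff_inner_right.2 hx,
      mem_orthogonal_singleton_iff_inner_right.2 hy⟩
  have hzK : 𝕜 ∙ z = Kᗮ := eq_of_le_of_finrank_le
    ((span_singleton_le_iff_mem _ _).2 (mem hxz hyz)) (by rwa [finrank_span_singleton hz])
  exact hzK ▸ mem hxw hyw

/-- The orthogonality hypotheses are the nine edges of the gadget `H_{ij}`. If `i` and `j` span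
a plane, its orthogonal complement is a line containing `a` and `d`, so `c ⊥ d` gives `c ⊥ a`;
then `c ⊥ a, b` makes `c` parallel to `i`, and `c ⊥ j` gives `i ⊥ j`. -/
lemma inner_eq_zero_or_span_singleton_eq_of_gadget [FiniteDimensional 𝕜 E]
    (hE : finrank 𝕜 E ≤ 3) {i j a b c d : E}
    (hi : i ≠ 0) (hj : j ≠ 0) (ha : a ≠ 0) (hb : b ≠ 0) (hc : c ≠ 0) (hd : d ≠ 0)
    (hia : ⟪i, a⟫_𝕜 = 0) (hib : ⟪i, b⟫_𝕜 = 0) (hid : ⟪i, d⟫_𝕜 = 0)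
    (hja : ⟪j, a⟫_𝕜 = 0) (hjc : ⟪j, c⟫_𝕜 = 0) (hjd : ⟪j, d⟫_𝕜 = 0)
    (hab : ⟪a, b⟫_𝕜 = 0) (hbc : ⟪b, c⟫_𝕜 = 0) (hcd : ⟪c, d⟫_𝕜 = 0) :
    ⟪i, j⟫_𝕜 = 0 ∨ 𝕜 ∙ i = 𝕜 ∙ j := by
  refine or_iff_not_imp_right.2 fun hij => ?_
  obtain ⟨s, rfl⟩ := mem_span_singleton.1 <| mem_span_singleton_of_orthogonal_pair hE
    (linearIndependent_pair_of_span_singleton_ne hi hj hij) hd hid hjd hia hja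
  have hac : ⟪s • d, c⟫_𝕜 = 0 := by rw [inner_smul_left, inner_eq_zero_symm.1 hcd, mul_zero]
  have horth : Pairwise fun k l => ⟪![s • d, b] k, ![s • d, b] l⟫_𝕜 = 0 := by
    intro k l hkl
    fin_cases k <;> fin_cases l <;> simp_all [inner_eq_zero_symm.1 hab]
  obtain ⟨t, rfl⟩ := mem_span_singleton.1 <| mem_span_singleton_of_orthogonal_pair hE
    (linearIndependent_of_ne_zero_of_inner_eq_zero (by simp [Fin.forall_fin_two, ha, hb]) horth)
    hi (inner_eq_zero_symm.1 hia) (inner_eq_zero_symm.1 hib) hac hbc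
  rw [inner_smul_right, mul_eq_zero] at hjc
  exact inner_eq_zero_symm.1 (hjc.resolve_left (by rintro rfl; simp at hc))

lemma eq_zero_of_span_singleton_eq_of_inner_eq_zero {x y : E} (hxy : 𝕜 ∙ x = 𝕜 ∙ y)
    (h : ⟪x, y⟫_𝕜 = 0) : y = 0 :=
  disjoint_def.1 (𝕜 ∙ x).orthogonal_disjoint y (hxy ▸ mem_span_singleton_self y)
    (mem_orthogonal_singleton_iff_inner_right.2 h)

variable {V W : Type*} {H : SimpleGraph V}

lemma Fits.gram_comp {H' : SimpleGraph W} {u : W → E} (hu : Fits H' (gram 𝕜 u)) (f : H →g H') :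
    Fits H (gram 𝕜 (u ∘ f)) :=
  ⟨fun v => hu.1 (f v), fun _ _ h => hu.2 _ _ (f.map_adj h)⟩

lemma ne_zero_of_fits_gram {u : V → E} (hu : Fits H (gram 𝕜 u)) (v : V) : u v ≠ 0 := by
  intro h
  simpa [h] using hu.1 v

lemma colorable_of_fits_gram [FiniteDimensional 𝕜 E] {k : ℕ} (hE : finrank 𝕜 E ≤ k)
    {u : V → E} (hu : Fits H (gram 𝕜 u))
    (hline : Pairwise fun v w => ⟪u v, u w⟫_𝕜 = 0 ∨ 𝕜 ∙ u v = 𝕜 ∙ u w) : H.Colorable k := by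
  let L := Set.range fun v => 𝕜 ∙ u v
  let C : H.Coloring L := .mk (fun v => ⟨_, v, rfl⟩) fun {v w} hvw heq =>
    ne_zero_of_fits_gram hu w <|
      eq_zero_of_span_singleton_eq_of_inner_eq_zero (congrArg Subtype.val heq) (hu.2 v w hvw)
  let rep : L → V := fun ℓ => ℓ.2.choose
  have hrep : ∀ ℓ, 𝕜 ∙ u (rep ℓ) = ℓ := fun ℓ => ℓ.2.choose_spec
  have hindep : LinearIndependent 𝕜 (u ∘ rep) := by
    refine linearIndependent_of_ne_zero_of_inner_eq_zero (fun ℓ => ne_zero_of_fits_gram hu _)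
      fun ℓ ℓ' hne => ?_
    have hlines : 𝕜 ∙ u (rep ℓ) ≠ 𝕜 ∙ u (rep ℓ') := by
      rwa [hrep, hrep, Ne, Subtype.val_inj]
    exact (hline fun h => hlines (congrArg (fun v => 𝕜 ∙ u v) h)).resolve_right hlines
  have : Finite L := hindep.finite
  have := Fintype.ofFinite L
  exact C.colorable.mono (hindep.fintype_card_le_finrank.trans hE)

end InnerProductSpace

section Gram

variable {𝕜 : Type*} [RCLike 𝕜] {n : Type*} [Fintype n]

lemma rank_gram {E : Type*} [NormedAddCommGroup E] [InnerProductSpace 𝕜 E]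
    [FiniteDimensional 𝕜 E] (v : n → E) :
    (gram 𝕜 v).rank = finrank 𝕜 (span 𝕜 (Set.range v)) := by
  let b := stdOrthonormalBasis 𝕜 E
  let e : E ≃ₗ[𝕜] (Fin (finrank 𝕜 E) → 𝕜) :=
    b.repr.toLinearEquiv.trans (WithLp.linearEquiv 2 𝕜 _)
  rw [gram_eq_conjTranspose_mul b, rank_conjTranspose_mul_self, rank_eq_finrank_span_cols,
    ← e.finrank_map_eq, map_span, ← Set.range_comp]
  rfl

lemma Matrix.PosSemidef.exists_gram_eq {A : Matrix n n 𝕜} (hA : A.PosSemidef) :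
    ∃ u : n → EuclideanSpace 𝕜 n, gram 𝕜 u = A := by
  classical
  open scoped MatrixOrder in
  obtain ⟨B, hB, -, rfl⟩ := CFC.exists_sqrt_of_isSelfAdjoint_of_quasispectrumRestricts
    hA.isHermitian (QuasispectrumRestricts.nnreal_of_nonneg hA.nonneg)
  refine ⟨fun j => WithLp.toLp 2 fun i => B i j, ?_⟩
  rw [gram_eq_conjTranspose_mul (EuclideanSpace.basisFun n 𝕜)]
  exact congrArg (· * B) hB.star_eq

lemma Matrix.PosSemidef.exists_gram_eq_and_finrank_eq_rank {A : Matrix n n 𝕜}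
    (hA : A.PosSemidef) : ∃ (K : Submodule 𝕜 (EuclideanSpace 𝕜 n)) (u : n → K),
      gram 𝕜 u = A ∧ finrank 𝕜 K = A.rank := by
  obtain ⟨u, rfl⟩ := hA.exists_gram_eq
  exact ⟨span 𝕜 (Set.range u), fun j => ⟨u j, subset_span ⟨j, rfl⟩⟩, rfl, (rank_gram u).symm⟩

lemma exists_posSemidef_rank_le_fits_of_colorable {V : Type*} [Fintype V] {H : SimpleGraph V}
    {k : ℕ} (hH : H.Colorable k) : ∃ A : Matrix V V 𝕜, A.PosSemidef ∧ A.rank ≤ k ∧ Fits H A := by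
  obtain ⟨C⟩ := hH
  let u : V → EuclideanSpace 𝕜 (Fin k) := fun v => EuclideanSpace.single (C v) 1
  refine ⟨gram 𝕜 u, posSemidef_gram 𝕜 u, ?_, fun v => ?_, fun v w hvw => ?_⟩
  · rw [rank_gram]
    exact (finrank_le _).trans finrank_euclideanSpace_fin.le
  · simp [u]
  · simp [u, EuclideanSpace.inner_single_left, C.valid hvw]

end Gram

section Graphs

lemma SimpleGraph.colorable_fromRel {V : Type*} {r : V → V → Prop} {k : ℕ} (f : V → Fin k)
    (hf : ∀ x y, r x y → f x ≠ f y) : (SimpleGraph.fromRel r).Colorable k :=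
  ⟨.mk f fun h => by
    obtain ⟨-, h | h⟩ := (SimpleGraph.fromRel_adj _ _ _).1 h
    exacts [hf _ _ h, (hf _ _ h).symm]⟩

def triDec.baseHom {W : Type*} (H : SimpleGraph W) : H →g triDec H :=
  ⟨fun w => (w, 0), fun h => (SimpleGraph.fromRel_adj _ _ _).2
    ⟨by simpa using h.ne, Or.inl (Or.inl ⟨rfl, rfl, h⟩)⟩⟩

lemma colorable_triDec {W : Type*} {H : SimpleGraph W} (hH : H.Colorable 3) :
    (triDec H).Colorable 3 := by
  obtain ⟨C⟩ := hH
  refine SimpleGraph.colorable_fromRel (fun p => C p.1 + p.2) ?_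
  rintro p q (⟨h0, h0', hadj⟩ | ⟨h1, h2⟩)
  · simpa [h0, h0'] using C.valid hadj
  · simpa [h1] using h2

variable {n : ℕ} (G : SimpleGraph (Fin n))

def gadgetGraph.inlHom : G →g gadgetGraph G :=
  ⟨Sum.inl, fun h => (SimpleGraph.fromRel_adj _ _ _).2 ⟨by simpa using h.ne, Or.inl h⟩⟩

/-- Colours of `a, b, c, d` when `i, j` have colours `x, y`; for `x ≠ y`, `-x - y` is the third
colour. -/
def gadgetColor (x y : Fin 3) : Fin 4 → Fin 3 :=
  if x = y then ![x + 1, x + 2, x + 1, x + 2] else ![-x - y, y, x, -x - y]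

lemma gadgetColor_valid (x y : Fin 3) :
    x ≠ gadgetColor x y 0 ∧ x ≠ gadgetColor x y 1 ∧ x ≠ gadgetColor x y 3 ∧
    y ≠ gadgetColor x y 0 ∧ y ≠ gadgetColor x y 2 ∧ y ≠ gadgetColor x y 3 ∧
    gadgetColor x y 0 ≠ gadgetColor x y 1 ∧ gadgetColor x y 1 ≠ gadgetColor x y 2 ∧
    gadgetColor x y 2 ≠ gadgetColor x y 3 := by
  revert x y; decide

lemma colorable_gadgetGraph (hG : G.Colorable 3) : (gadgetGraph G).Colorable 3 := by
  obtain ⟨C⟩ := hG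
  refine SimpleGraph.colorable_fromRel
    (Sum.elim C fun q => gadgetColor (C q.1.1.1) (C q.1.1.2) q.2) ?_
  rintro (v | ⟨⟨⟨i, j⟩, hij⟩, k⟩) (w | ⟨⟨⟨i', j'⟩, hij'⟩, l⟩) h
  · exact C.valid h
  · have := gadgetColor_valid (C i') (C j')
    obtain ⟨rfl, hk⟩ | ⟨rfl, hk⟩ := h <;> rcases hk with rfl | rfl | rfl <;> simp_all
  · exact h.elim
  · obtain ⟨hpq, hkl⟩ := h
    cases hpq
    have := gadgetColor_valid (C i) (C j)
    rcases hkl with ⟨rfl, rfl⟩ | ⟨rfl, rfl⟩ | ⟨rfl, rfl⟩ <;> simp_all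

variable {𝕜 E : Type*} [RCLike 𝕜] [NormedAddCommGroup E] [InnerProductSpace 𝕜 E]
  [FiniteDimensional 𝕜 E]

lemma inner_eq_zero_or_span_singleton_eq_of_fits_gadgetGraph (hE : finrank 𝕜 E ≤ 3)
    {u : GVert n → E} (hu : Fits (gadgetGraph G) (gram 𝕜 u)) {i j : Fin n} (hij : i < j) :
    ⟪u (.inl i), u (.inl j)⟫_𝕜 = 0 ∨ 𝕜 ∙ u (.inl i) = 𝕜 ∙ u (.inl j) := by
  have orth : ∀ x y, x ≠ y → gadgetRel G x y → ⟪u x, u y⟫_𝕜 = 0 :=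
    fun x y hne h => hu.2 x y ((SimpleGraph.fromRel_adj _ _ _).2 ⟨hne, Or.inl h⟩)
  let g : Fin 4 → GVert n := fun k => .inr (⟨(i, j), hij⟩, k)
  have hne := ne_zero_of_fits_gram hu
  refine inner_eq_zero_or_span_singleton_eq_of_gadget hE (hne _) (hne _)
    (hne (g 0)) (hne (g 1)) (hne (g 2)) (hne (g 3)) ?_ ?_ ?_ ?_ ?_ ?_ ?_ ?_ ?_ <;>
    exact orth _ _ (by simp [g]) (by simp [g, gadgetRel])

lemma colorable_of_fits_gram_gadgetGraph (hE : finrank 𝕜 E ≤ 3) {u : GVert n → E}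
    (hu : Fits (gadgetGraph G) (gram 𝕜 u)) : G.Colorable 3 := by
  refine colorable_of_fits_gram hE (hu.gram_comp (gadgetGraph.inlHom G)) fun v w hvw => ?_
  rcases hvw.lt_or_gt with h | h
  · exact inner_eq_zero_or_span_singleton_eq_of_fits_gadgetGraph G hE hu h
  · exact (inner_eq_zero_or_span_singleton_eq_of_fits_gadgetGraph G hE hu h).imp
      inner_eq_zero_symm.1 Eq.symm

end Graphs

theorem stmt1 {n : ℕ} (G : SimpleGraph (Fin n)) :
    G.Colorable 3 ↔
      ∃ A : Matrix (GVert n × Fin 3) (GVert n × Fin 3) ℂ,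
        A.PosSemidef ∧ A.rank ≤ 3 ∧ Fits (triDec (gadgetGraph G)) A := by
  refine ⟨fun hG => exists_posSemidef_rank_le_fits_of_colorable
    (colorable_triDec (colorable_gadgetGraph G hG)), ?_⟩
  rintro ⟨A, hA, hrank, hfit⟩
  obtain ⟨K, u, rfl, hK⟩ := hA.exists_gram_eq_and_finrank_eq_rank
  exact colorable_of_fits_gram_gadgetGraph G (hK.trans_le hrank)
    (hfit.gram_comp (triDec.baseHom _))
end

section
/- Let G be a finite simple graph. There exist vectors ψ_{y,z} ∈ ℂ³, indexed by the vertices y of G' and z ∈ {1,2,3}, such that the matrix with entries |⟨ψ_{y,z}, ψ_{y',z'}⟩|² fits Δ(G'), if and only if there exist a quantum state ρ on ℂ³⊗ℂ³ (a positive semidefinite complex 9×9 matrix of trace 1) and, for each vertex y of G', two 3-dimensional POVMs (E_{y,1}, E_{y,2}, E_{y,3}) and (F_{y,1}, F_{y,2}, F_{y,3}) such that the matrix M with entries M_{(y,z),(y',z')} = 3·tr(ρ (E_{y,z} ⊗ F_{y',z'})) fits Δ(G'), where ⊗ denotes the Kronecker product. -/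
/-!
Given the vectors, take the rank-one projections `E_{y,z} = ψ_{y,z} ψ_{y,z}*`, their complex
conjugates `F_{y,z}`, and the maximally entangled state `ρ = Φ Φ* / 3`, `Φ = ∑ i, e_i ⊗ e_i`;
then `3 tr(ρ (E_a ⊗ F_b)) = |⟨ψ_a, ψ_b⟩|²`, and since each triangle of `Δ(G')` makes
`ψ_{y,1}, ψ_{y,2}, ψ_{y,3}` an orthonormal basis, the `E_y` and `F_y` are POVMs.

Conversely, for positive semidefinite `ρ` and `S`, `tr(ρ S) = 0` forces `S ρ = 0`, so
`(E_a ⊗ F_b) ρ = 0` along every edge. Completeness of the POVMs and the triangle edges give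
`(E_a ⊗ 1) ρ = (E_a ⊗ F_a) ρ = (1 ⊗ F_a) ρ`, hence `(E_a E_b ⊗ 1) ρ = 0` along edges, and with
`σ` the partial trace of `ρ` over the second factor, `E_a E_b σ = 0` along edges while
`tr(E_a σ) = 1/3`. A normalised nonzero column of `E_a σ` is then a vector `ψ_a`, and
`ψ_a* ψ_b` is an entry of `σ* E_a E_b σ`.
-/

open Matrix
open scoped ComplexOrder

/-- A `d`-dimensional quantum state: a positive semidefinite complex `d × d` matrix of trace 1. -/
def IsState {d : ℕ} (ρ : Matrix (Fin d) (Fin d) ℂ) : Prop :=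
  ρ.PosSemidef ∧ ρ.trace = 1

/-- A `d`-dimensional POVM with `Z` outcomes: positive semidefinite complex `d × d` matrices
summing to the identity. -/
def IsPOVM {d Z : ℕ} (E : Fin Z → Matrix (Fin d) (Fin d) ℂ) : Prop :=
  (∀ z, (E z).PosSemidef) ∧ ∑ z, E z = 1

open Kronecker
open scoped MatrixOrder

namespace Matrix

theorem PosSemidef.mul_eq_zero_of_trace_mul_eq_zero {m 𝕜 : Type*} [Fintype m] [RCLike 𝕜]
    {ρ S : Matrix m m 𝕜} (hρ : ρ.PosSemidef) (hS : S.PosSemidef) (h : (ρ * S).trace = 0) :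
    S * ρ = 0 := by
  classical
  obtain ⟨C, rfl⟩ := CStarAlgebra.nonneg_iff_eq_star_mul_self.mp hρ.nonneg
  obtain ⟨B, rfl⟩ := CStarAlgebra.nonneg_iff_eq_star_mul_self.mp hS.nonneg
  simp only [star_eq_conjTranspose] at h ⊢
  have hBC : B * Cᴴ = 0 := by
    rw [← trace_mul_conjTranspose_self_eq_zero_iff, ← h, conjTranspose_mul,
      conjTranspose_conjTranspose, mul_assoc, trace_mul_comm]
    simp only [mul_assoc]
  rw [mul_assoc, ← mul_assoc B, hBC, zero_mul, mul_zero]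

section TraceRight

variable {m n R : Type*} [Fintype n]

def traceRight [AddCommMonoid R] (ρ : Matrix (m × n) (m × n) R) : Matrix m m R :=
  of fun i i' => ∑ j, ρ (i, j) (i', j)

@[simp]
theorem traceRight_zero [AddCommMonoid R] : traceRight (0 : Matrix (m × n) (m × n) R) = 0 := by
  ext
  simp [traceRight]

variable [Semiring R]

theorem trace_traceRight [Fintype m] (ρ : Matrix (m × n) (m × n) R) :
    (traceRight ρ).trace = ρ.trace := by
  simp [traceRight, trace, Fintype.sum_prod_type]

theorem traceRight_kronecker_one_mul [Fintype m] [DecidableEq n] (A : Matrix m m R)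
    (ρ : Matrix (m × n) (m × n) R) :
    traceRight ((A ⊗ₖ (1 : Matrix n n R)) * ρ) = A * traceRight ρ := by
  ext i i'
  simp only [traceRight, of_apply, mul_apply, Fintype.sum_prod_type, kronecker_apply, one_apply,
    mul_ite, mul_one, mul_zero, ite_mul, zero_mul, Finset.sum_ite_eq, Finset.mem_univ, if_true,
    Finset.mul_sum]
  exact Finset.sum_comm

end TraceRight

section Kronecker

variable {Z l m n p R : Type*} [CommSemiring R] [Fintype Z]

theorem kronecker_sum (A : Matrix l m R) (B : Z → Matrix n p R) :
    A ⊗ₖ (∑ z, B z) = ∑ z, A ⊗ₖ B z :=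
  map_sum (kroneckerBilinear (R := R) (α := R) A) B Finset.univ

theorem sum_kronecker (A : Z → Matrix l m R) (B : Matrix n p R) :
    (∑ z, A z) ⊗ₖ B = ∑ z, A z ⊗ₖ B :=
  map_sum ((kroneckerBilinear (R := R) (α := R)).flip B) A Finset.univ

theorem vecMulVec_kronecker_vecMulVec (a : l → R) (b : m → R) (c : n → R) (e : p → R) :
    vecMulVec a b ⊗ₖ vecMulVec c e =
      vecMulVec (fun q => a q.1 * c q.2) (fun q => b q.1 * e q.2) := by
  ext ⟨i, j⟩ ⟨i', j'⟩
  exact mul_mul_mul_comm _ _ _ _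

end Kronecker

section VecMulVec

variable {m 𝕜 : Type*} [Fintype m] [RCLike 𝕜]

theorem trace_vecMulVec_star_mul_vecMulVec_star (a b : m → 𝕜) :
    (vecMulVec a (star a) * vecMulVec b (star b)).trace = ((‖star a ⬝ᵥ b‖ ^ 2 : ℝ) : 𝕜) := by
  rw [vecMulVec_mul_vecMulVec, trace_vecMulVec, dotProduct_smul, smul_eq_mul, dotProduct_star,
    dotProduct_comm b, RCLike.star_def, RCLike.mul_conj, RCLike.ofReal_pow]

theorem sum_vecMulVec_star_eq_one [DecidableEq m] (v : m → m → 𝕜)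
    (hv : ∀ z z', star (v z) ⬝ᵥ v z' = (1 : Matrix m m 𝕜) z z') :
    ∑ z, vecMulVec (v z) (star (v z)) = 1 := by
  set U : Matrix m m 𝕜 := (of v)ᵀ
  have hU : Uᴴ * U = 1 := by
    ext z z'
    rw [← hv]
    rfl
  rw [← mul_eq_one_comm.mp hU]
  ext i j
  simp [U, sum_apply, mul_apply, vecMulVec_apply]

theorem norm_sq_star_dotProduct_self_eq_one_iff (v : m → 𝕜) :
    ‖star v ⬝ᵥ v‖ ^ 2 = 1 ↔ star v ⬝ᵥ v = 1 := by
  rw [pow_eq_one_iff_of_nonneg (norm_nonneg _) two_ne_zero, ← RCLike.ofReal_inj (K := 𝕜),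
    RCLike.norm_of_nonneg' (dotProduct_star_self_nonneg v), RCLike.ofReal_one]

theorem exists_star_dotProduct_smul_self_eq_one {v : m → 𝕜} (hv : v ≠ 0) :
    ∃ t : 𝕜, star (t • v) ⬝ᵥ (t • v) = 1 := by
  obtain ⟨r, hr, hrv⟩ := RCLike.nonneg_iff_exists_ofReal.mp (dotProduct_star_self_nonneg v)
  have hr0 : r ≠ 0 := by
    rintro rfl
    exact hv (dotProduct_star_self_eq_zero.mp (by simpa using hrv.symm))
  refine ⟨((√r)⁻¹ : ℝ), ?_⟩
  rw [star_smul, smul_dotProduct, dotProduct_smul, ← hrv, RCLike.star_def, RCLike.conj_ofReal,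
    smul_eq_mul, smul_eq_mul, ← RCLike.ofReal_mul, ← RCLike.ofReal_mul, ← mul_assoc, ← mul_inv,
    Real.mul_self_sqrt hr, inv_mul_cancel₀ hr0, RCLike.ofReal_one]

theorem exists_unit_vectors_of_conjTranspose_mul_eq_zero {ι : Type*} (N : ι → Matrix m m 𝕜)
    (hN : ∀ i, N i ≠ 0) :
    ∃ w : ι → m → 𝕜, (∀ i, star (w i) ⬝ᵥ w i = 1) ∧
      ∀ i j, (N i)ᴴ * N j = 0 → star (w i) ⬝ᵥ w j = 0 := by
  have hcol : ∀ i, ∃ k, (fun r => N i r k) ≠ 0 := fun i => by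
    by_contra! h
    exact hN i (ext fun r k => congrFun (h k) r)
  choose k hk using hcol
  choose t ht using fun i => exists_star_dotProduct_smul_self_eq_one (hk i)
  refine ⟨fun i => t i • fun r => N i r (k i), ht, fun i j hij => ?_⟩
  rw [star_smul, smul_dotProduct, dotProduct_smul]
  have hentry : star (fun r => N i r (k i)) ⬝ᵥ (fun r => N j r (k j)) =
      ((N i)ᴴ * N j) (k i) (k j) := rfl
  rw [hentry, hij, zero_apply, smul_zero, smul_zero]

end VecMulVec

end Matrix

section Fits

variable {V : Type*} {H : SimpleGraph V}

theorem Fits.map {R S : Type*} [Zero R] [One R] [Zero S] [One S] {A : Matrix V V R}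
    (hA : Fits H A) {f : R → S} (hf₀ : f 0 = 0) (hf₁ : f 1 = 1) : Fits H (A.map f) :=
  ⟨fun v => by rw [map_apply, hA.1 v, hf₁], fun v w h => by rw [map_apply, hA.2 v w h, hf₀]⟩

theorem fits_norm_sq_gram_iff {m 𝕜 : Type*} [Fintype m] [RCLike 𝕜] (w : V → m → 𝕜) :
    Fits H (of fun a b => ‖star (w a) ⬝ᵥ w b‖ ^ 2) ↔
      (∀ a, star (w a) ⬝ᵥ w a = 1) ∧ ∀ a b, H.Adj a b → star (w a) ⬝ᵥ w b = 0 := by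
  simp only [Fits, of_apply, norm_sq_star_dotProduct_self_eq_one_iff, ne_eq,
    OfNat.ofNat_ne_zero, not_false_eq_true, pow_eq_zero_iff, norm_eq_zero]

end Fits

theorem triDec_adj_of_ne {W : Type*} (H : SimpleGraph W) (y : W) {z z' : Fin 3} (h : z ≠ z') :
    (triDec H).Adj (y, z) (y, z') := by
  rw [triDec, SimpleGraph.fromRel_adj]
  exact ⟨fun hc => h (congrArg Prod.snd hc), Or.inl (Or.inr ⟨rfl, h⟩)⟩

section MaximallyEntangled

variable (m : Type*) [Fintype m] [DecidableEq m]

def maxEntangledVec : m × m → ℂ := fun p => (1 : Matrix m m ℂ) p.1 p.2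

noncomputable def maxEntangledState : Matrix (m × m) (m × m) ℂ :=
  (Fintype.card m : ℂ)⁻¹ • vecMulVec (maxEntangledVec m) (star (maxEntangledVec m))

theorem posSemidef_maxEntangledState : (maxEntangledState m).PosSemidef :=
  (posSemidef_vecMulVec_self_star _).smul (inv_nonneg.mpr (Nat.cast_nonneg _))

theorem trace_maxEntangledState [Nonempty m] : (maxEntangledState m).trace = 1 := by
  have hcard : (Fintype.card m : ℂ) ≠ 0 := Nat.cast_ne_zero.mpr Fintype.card_ne_zero
  simp [maxEntangledState, maxEntangledVec, dotProduct, Fintype.sum_prod_type, one_apply, hcard]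

variable {m}

theorem card_mul_trace_maxEntangledState_mul [Nonempty m] (u v : m → ℂ) :
    (Fintype.card m : ℂ) *
        (maxEntangledState m * (vecMulVec u (star u) ⊗ₖ vecMulVec (star v) v)).trace =
      ((‖star u ⬝ᵥ v‖ ^ 2 : ℝ) : ℂ) := by
  have hcard : (Fintype.card m : ℂ) ≠ 0 := Nat.cast_ne_zero.mpr Fintype.card_ne_zero
  have hkron : vecMulVec u (star u) ⊗ₖ vecMulVec (star v) v =
      vecMulVec (fun q => u q.1 * star v q.2) (star fun q => u q.1 * star v q.2) := by
    rw [vecMulVec_kronecker_vecMulVec]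
    congr 1
    ext q
    simp [mul_comm]
  have hpair :
      star (maxEntangledVec m) ⬝ᵥ (fun q => u q.1 * star v q.2) = star (star u ⬝ᵥ v) := by
    simp [maxEntangledVec, dotProduct, Fintype.sum_prod_type, one_apply, mul_comm]
  rw [hkron, maxEntangledState, smul_mul_assoc, trace_smul,
    trace_vecMulVec_star_mul_vecMulVec_star, hpair, norm_star, smul_eq_mul, ← mul_assoc,
    mul_inv_cancel₀ hcard, one_mul]
  rfl

end MaximallyEntangled

section Orthonormal

variable {d : ℕ} {v : Fin d → Fin d → ℂ}
  (hv : ∀ z z', star (v z) ⬝ᵥ v z' = (1 : Matrix (Fin d) (Fin d) ℂ) z z')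
include hv

theorem isPOVM_vecMulVec_self_star : IsPOVM fun z => vecMulVec (v z) (star (v z)) :=
  ⟨fun _ => posSemidef_vecMulVec_self_star _, sum_vecMulVec_star_eq_one v hv⟩

theorem isPOVM_vecMulVec_star_self : IsPOVM fun z => vecMulVec (star (v z)) (v z) := by
  have hconj : ∀ z z', star (star (v z)) ⬝ᵥ star (v z') = (1 : Matrix (Fin d) (Fin d) ℂ) z z' :=
      fun z z' => by
    rw [star_dotProduct_star, dotProduct_comm, hv]
    simp [one_apply]
  simpa only [star_star] using isPOVM_vecMulVec_self_star hconj

end Orthonormal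

theorem exists_quantum_of_fits_gram {W : Type*} {d : ℕ} [NeZero d] (K : SimpleGraph (W × Fin d))
    (hK : ∀ y z z', z ≠ z' → K.Adj (y, z) (y, z')) (ψ : W → Fin d → Fin d → ℂ)
    (hψ : Fits K (of fun a b => ‖star (ψ a.1 a.2) ⬝ᵥ ψ b.1 b.2‖ ^ 2)) :
    ∃ (ρ : Matrix (Fin d × Fin d) (Fin d × Fin d) ℂ)
      (E F : W → Fin d → Matrix (Fin d) (Fin d) ℂ),
      ρ.PosSemidef ∧ ρ.trace = 1 ∧ (∀ y, IsPOVM (E y)) ∧ (∀ y, IsPOVM (F y)) ∧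
      Fits K (of fun a b => (d : ℂ) * (ρ * (E a.1 a.2 ⊗ₖ F b.1 b.2)).trace) := by
  obtain ⟨hunit, horth⟩ := (fits_norm_sq_gram_iff fun a : W × Fin d => ψ a.1 a.2).mp hψ
  have hon : ∀ y z z', star (ψ y z) ⬝ᵥ ψ y z' = (1 : Matrix (Fin d) (Fin d) ℂ) z z' := by
    intro y z z'
    by_cases h : z = z'
    · subst h
      rw [one_apply_eq]
      exact hunit (y, z)
    · rw [one_apply_ne h]
      exact horth (y, z) (y, z') (hK y z z' h)
  refine ⟨maxEntangledState (Fin d), fun y z => vecMulVec (ψ y z) (star (ψ y z)),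
    fun y z => vecMulVec (star (ψ y z)) (ψ y z), posSemidef_maxEntangledState _,
    trace_maxEntangledState _, fun y => isPOVM_vecMulVec_self_star (hon y),
    fun y => isPOVM_vecMulVec_star_self (hon y), ?_⟩
  convert hψ.map Complex.ofReal_zero Complex.ofReal_one using 1
  ext a b
  simpa using card_mul_trace_maxEntangledState_mul (ψ a.1 a.2) (ψ b.1 b.2)

section QuantumToGram

variable {W : Type*} {k d e : ℕ} {K : SimpleGraph (W × Fin k)}
  {ρ : Matrix (Fin d × Fin e) (Fin d × Fin e) ℂ}
  {E : W → Fin k → Matrix (Fin d) (Fin d) ℂ} {F : W → Fin k → Matrix (Fin e) (Fin e) ℂ}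
  (hρ : ρ.PosSemidef) (hE : ∀ y, IsPOVM (E y)) (hF : ∀ y, IsPOVM (F y))
  (hzero : ∀ a b, K.Adj a b → (ρ * (E a.1 a.2 ⊗ₖ F b.1 b.2)).trace = 0)
include hρ hE hF hzero

theorem kronecker_mul_eq_zero_of_adj {a b : W × Fin k} (hab : K.Adj a b) :
    (E a.1 a.2 ⊗ₖ F b.1 b.2) * ρ = 0 :=
  hρ.mul_eq_zero_of_trace_mul_eq_zero (((hE a.1).1 a.2).kronecker ((hF b.1).1 b.2))
    (hzero a b hab)

variable (hK : ∀ y z z', z ≠ z' → K.Adj (y, z) (y, z'))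
include hK

theorem kronecker_one_mul_eq (y : W) (z : Fin k) :
    (E y z ⊗ₖ (1 : Matrix (Fin e) (Fin e) ℂ)) * ρ = (E y z ⊗ₖ F y z) * ρ := by
  calc (E y z ⊗ₖ (1 : Matrix (Fin e) (Fin e) ℂ)) * ρ = ∑ z', (E y z ⊗ₖ F y z') * ρ := by
        rw [← Finset.sum_mul, ← kronecker_sum, (hF y).2]
    _ = (E y z ⊗ₖ F y z) * ρ := Fintype.sum_eq_single z fun z' hz' =>
        kronecker_mul_eq_zero_of_adj hρ hE hF hzero (a := (y, z)) (b := (y, z'))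
          (hK y z z' (Ne.symm hz'))

theorem one_kronecker_mul_eq (y : W) (z : Fin k) :
    ((1 : Matrix (Fin d) (Fin d) ℂ) ⊗ₖ F y z) * ρ = (E y z ⊗ₖ F y z) * ρ := by
  calc ((1 : Matrix (Fin d) (Fin d) ℂ) ⊗ₖ F y z) * ρ = ∑ z', (E y z' ⊗ₖ F y z) * ρ := by
        rw [← Finset.sum_mul, ← sum_kronecker, (hE y).2]
    _ = (E y z ⊗ₖ F y z) * ρ := Fintype.sum_eq_single z fun z' hz' =>
        kronecker_mul_eq_zero_of_adj hρ hE hF hzero (a := (y, z')) (b := (y, z))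
          (hK y z' z hz')

theorem mul_mul_traceRight_eq_zero_of_adj {a b : W × Fin k} (hab : K.Adj a b) :
    E a.1 a.2 * E b.1 b.2 * traceRight ρ = 0 := by
  have hone : ((E a.1 a.2 * E b.1 b.2) ⊗ₖ (1 : Matrix (Fin e) (Fin e) ℂ)) * ρ = 0 := by
    calc ((E a.1 a.2 * E b.1 b.2) ⊗ₖ (1 : Matrix (Fin e) (Fin e) ℂ)) * ρ
        = (E a.1 a.2 ⊗ₖ 1) * ((E b.1 b.2 ⊗ₖ 1) * ρ) := by
          rw [← mul_assoc, ← mul_kronecker_mul, mul_one]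
      _ = (E a.1 a.2 ⊗ₖ 1) * ((1 ⊗ₖ F b.1 b.2) * ρ) := by
          rw [kronecker_one_mul_eq hρ hE hF hzero hK, one_kronecker_mul_eq hρ hE hF hzero hK]
      _ = (E a.1 a.2 ⊗ₖ F b.1 b.2) * ρ := by
          rw [← mul_assoc, ← mul_kronecker_mul, mul_one, one_mul]
      _ = 0 := kronecker_mul_eq_zero_of_adj hρ hE hF hzero hab
  simpa [traceRight_kronecker_one_mul] using congrArg traceRight hone

theorem trace_mul_traceRight (y : W) (z : Fin k) :
    (E y z * traceRight ρ).trace = (ρ * (E y z ⊗ₖ F y z)).trace := by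
  rw [← traceRight_kronecker_one_mul, trace_traceRight, kronecker_one_mul_eq hρ hE hF hzero hK,
    trace_mul_comm]

end QuantumToGram

theorem exists_gram_of_fits_quantum {W : Type*} {k d e : ℕ} (K : SimpleGraph (W × Fin k))
    (hK : ∀ y z z', z ≠ z' → K.Adj (y, z) (y, z'))
    (ρ : Matrix (Fin d × Fin e) (Fin d × Fin e) ℂ) (E : W → Fin k → Matrix (Fin d) (Fin d) ℂ)
    (F : W → Fin k → Matrix (Fin e) (Fin e) ℂ) (hρ : ρ.PosSemidef) (hE : ∀ y, IsPOVM (E y))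
    (hF : ∀ y, IsPOVM (F y)) (c : ℂ)
    (hfits : Fits K (of fun a b => c * (ρ * (E a.1 a.2 ⊗ₖ F b.1 b.2)).trace)) :
    ∃ ψ : W → Fin k → Fin d → ℂ, Fits K (of fun a b => ‖star (ψ a.1 a.2) ⬝ᵥ ψ b.1 b.2‖ ^ 2) := by
  have hdiag : ∀ a : W × Fin k, c * (ρ * (E a.1 a.2 ⊗ₖ F a.1 a.2)).trace = 1 := hfits.1
  have hzero : ∀ a b, K.Adj a b → (ρ * (E a.1 a.2 ⊗ₖ F b.1 b.2)).trace = 0 := fun a b hab =>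
    (mul_eq_zero.mp (hfits.2 a b hab)).resolve_left (left_ne_zero_of_mul_eq_one (hdiag a))
  set N : W × Fin k → Matrix (Fin d) (Fin d) ℂ := fun a => E a.1 a.2 * traceRight ρ
  have hN : ∀ a, N a ≠ 0 := fun a hNa => by
    have := hdiag a
    rw [← trace_mul_traceRight hρ hE hF hzero hK] at this
    simp [N, hNa] at this
  obtain ⟨w, hunit, horth⟩ := exists_unit_vectors_of_conjTranspose_mul_eq_zero N hN
  refine ⟨fun y z => w (y, z), (fits_norm_sq_gram_iff w).mpr ⟨hunit, fun a b hab => horth a b ?_⟩⟩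
  rw [conjTranspose_mul, ((hE a.1).1 a.2).isHermitian.eq, mul_assoc, ← mul_assoc (E a.1 a.2),
    mul_mul_traceRight_eq_zero_of_adj hρ hE hF hzero hK hab, mul_zero]

open Kronecker in
theorem stmt5 {n : ℕ} (G : SimpleGraph (Fin n)) :
    (∃ ψ : GVert n → Fin 3 → (Fin 3 → ℂ),
        Fits (triDec (gadgetGraph G))
          (Matrix.of fun a b : GVert n × Fin 3 =>
            (‖∑ j, (starRingEnd ℂ) (ψ a.1 a.2 j) * ψ b.1 b.2 j‖) ^ 2)) ↔
      ∃ (ρ : Matrix (Fin 3 × Fin 3) (Fin 3 × Fin 3) ℂ)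
        (E F : GVert n → Fin 3 → Matrix (Fin 3) (Fin 3) ℂ),
        ρ.PosSemidef ∧ ρ.trace = 1 ∧
        (∀ y, IsPOVM (E y)) ∧ (∀ y, IsPOVM (F y)) ∧
        Fits (triDec (gadgetGraph G))
          (Matrix.of fun a b : GVert n × Fin 3 =>
            3 * (ρ * (E a.1 a.2 ⊗ₖ F b.1 b.2)).trace) := by
  have hK := fun y (z z' : Fin 3) (h : z ≠ z') => triDec_adj_of_ne (gadgetGraph G) y h
  constructor
  · rintro ⟨ψ, hψ⟩
    simpa only [Nat.cast_ofNat] using exists_quantum_of_fits_gram _ hK ψ hψ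
  · rintro ⟨ρ, E, F, hρ, -, hE, hF, hfits⟩
    exact exists_gram_of_fits_quantum _ hK ρ E F hρ hE hF 3 hfits
end

section
/- Let ρ_1, ..., ρ_Z be Z-dimensional quantum states and let (E_1,...,E_Z) be a Z-dimensional POVM with Z outcomes such that tr(ρ_z E_z) = 1 for all z ∈ {1,...,Z}. Then there exists an orthonormal basis (ψ_1,...,ψ_Z) of ℂ^Z such that ρ_z = E_z = ψ_z ψ_z* for all z; in particular every ρ_z is a rank-one orthogonal projection. -/
open Matrix
open scoped ComplexOrder

/-- The rank-one matrix `ψψ*` with entries `ψ_k ⬝ conj (ψ_l)`. -/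
def outer {d : ℕ} (ψ : Fin d → ℂ) : Matrix (Fin d) (Fin d) ℂ :=
  Matrix.of fun k l => ψ k * (starRingEnd ℂ) (ψ l)

/-!
A state satisfies `ρ ≤ (tr ρ) • 1 = 1`, so for an effect `E ≥ 0` the condition `tr(ρ E) = 1`
forces `tr E ≥ 1`. The `Z` effects sum to the identity of `ℂ^Z`, so their traces add up to `Z`
and each equals `1`. For positive semidefinite `X, Y`, `tr(X Y) = 0` implies `X Y = 0`; applied
to `(1 - ρ_z) E_z` and `ρ_z (1 - E_z)` this gives `E_z = ρ_z E_z = ρ_z`, so `ρ_z` is an orthogonal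
projection of trace one, i.e. `ψ_z ψ_z*`. Finally the square matrix `V` with columns `ψ_z`
satisfies `V V* = ∑ E_z = 1`, hence `V* V = 1`, which is the orthonormality of the `ψ_z`.
-/

theorem exists_eq_pi_single_of_mul_self_eq_self {ι R : Type*} [Fintype ι] [DecidableEq ι]
    [Ring R] [LinearOrder R] [IsStrictOrderedRing R] {f : ι → R}
    (hf : ∀ i, f i * f i = f i) (hsum : ∑ i, f i = 1) : ∃ i, f = Pi.single i 1 := by
  have hnonneg : ∀ i, 0 ≤ f i := fun i => hf i ▸ mul_self_nonneg (f i)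
  obtain ⟨i, -, hi⟩ := Finset.exists_ne_zero_of_sum_ne_zero (hsum ▸ one_ne_zero)
  have hi1 : f i = 1 := mul_left_cancel₀ hi (by rw [hf, mul_one])
  have hrest : ∑ j ∈ Finset.univ.erase i, f j = 0 := by
    rw [← add_right_inj (f i), Finset.add_sum_erase _ _ (Finset.mem_univ i), hsum, hi1, add_zero]
  refine ⟨i, funext fun j => ?_⟩
  rcases eq_or_ne j i with rfl | hj
  · simp [hi1]
  · rw [Pi.single_eq_of_ne hj]
    exact (Finset.sum_eq_zero_iff_of_nonneg fun k _ => hnonneg k).mp hrest j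
      (Finset.mem_erase.mpr ⟨hj, Finset.mem_univ j⟩)

namespace Matrix

variable {n 𝕜 : Type*} [Fintype n] [RCLike 𝕜] {ρ A : Matrix n n 𝕜}

open scoped MatrixOrder in
/-- With `ρ = S* S` and `A = T* T`, `tr(ρ A) = tr(C C*)` for `C = S T*`, and `ρ A = S* C T`. -/
theorem PosSemidef.exists_trace_mul_eq_trace_mul_conjTranspose (hρ : ρ.PosSemidef)
    (hA : A.PosSemidef) :
    ∃ C : Matrix n n 𝕜, (ρ * A).trace = (C * Cᴴ).trace ∧ (C = 0 → ρ * A = 0) := by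
  classical
  obtain ⟨S, rfl⟩ := CStarAlgebra.nonneg_iff_eq_star_mul_self.mp hρ.nonneg
  obtain ⟨T, rfl⟩ := CStarAlgebra.nonneg_iff_eq_star_mul_self.mp hA.nonneg
  refine ⟨S * Tᴴ, ?_, fun hC => ?_⟩
  · simp only [star_eq_conjTranspose, conjTranspose_mul, conjTranspose_conjTranspose]
    rw [Matrix.mul_assoc, trace_mul_comm]
    simp only [Matrix.mul_assoc]
  · rw [Matrix.mul_assoc, ← Matrix.mul_assoc S, star_eq_conjTranspose T, hC, Matrix.zero_mul,
      Matrix.mul_zero]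

theorem PosSemidef.trace_mul_nonneg (hρ : ρ.PosSemidef) (hA : A.PosSemidef) :
    0 ≤ (ρ * A).trace := by
  obtain ⟨C, hC, -⟩ := hρ.exists_trace_mul_eq_trace_mul_conjTranspose hA
  exact hC ▸ (posSemidef_self_mul_conjTranspose C).trace_nonneg

theorem PosSemidef.mul_eq_zero_of_trace_mul_eq_zero_s13 (hρ : ρ.PosSemidef) (hA : A.PosSemidef)
    (h : (ρ * A).trace = 0) : ρ * A = 0 := by
  obtain ⟨C, hC, hzero⟩ := hρ.exists_trace_mul_eq_trace_mul_conjTranspose hA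
  exact hzero (trace_mul_conjTranspose_self_eq_zero_iff.mp (hC ▸ h))

open scoped MatrixOrder in
theorem PosSemidef.posSemidef_trace_smul_one_sub [DecidableEq n] (hA : A.PosSemidef) :
    (A.trace • 1 - A).PosSemidef := by
  have hle : A ≤ algebraMap ℝ (Matrix n n 𝕜) (∑ i, hA.1.eigenvalues i) := by
    refine le_algebraMap_of_spectrum_le fun x hx => ?_
    rw [hA.1.spectrum_real_eq_range_eigenvalues] at hx
    obtain ⟨i, rfl⟩ := hx
    exact Finset.single_le_sum (fun j _ => hA.eigenvalues_nonneg j) (Finset.mem_univ i)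
  rwa [Algebra.algebraMap_eq_smul_one, RCLike.real_smul_eq_coe_smul (K := 𝕜), RCLike.ofReal_sum,
    ← hA.1.trace_eq_sum_eigenvalues] at hle

/-- The eigenvalues of an idempotent are `0` or `1`; trace one leaves a single `1`, so the
spectral decomposition has a single rank-one term. -/
theorem PosSemidef.exists_eq_vecMulVec_of_mul_self_eq_self [DecidableEq n] (hA : A.PosSemidef)
    (hAA : A * A = A) (htr : A.trace = 1) : ∃ v : n → 𝕜, A = vecMulVec v (star v) := by
  have hidem : ∀ i, hA.1.eigenvalues i * hA.1.eigenvalues i = hA.1.eigenvalues i := by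
    intro i
    have hD := congrArg (Unitary.conjStarAlgAut 𝕜 _ (star hA.1.eigenvectorUnitary)) hAA
    rw [map_mul, hA.1.conjStarAlgAut_star_eigenvectorUnitary, diagonal_mul_diagonal] at hD
    have hii := congrFun (congrFun hD i) i
    simp only [diagonal_apply_eq, Function.comp_apply] at hii
    exact_mod_cast hii
  have hsum : ∑ i, hA.1.eigenvalues i = 1 := by
    have := hA.1.trace_eq_sum_eigenvalues
    rw [htr] at this
    exact_mod_cast this.symm
  obtain ⟨i, hi⟩ := exists_eq_pi_single_of_mul_self_eq_self hidem hsum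
  have hdiag : diagonal (RCLike.ofReal ∘ Pi.single i 1) =
      vecMulVec (Pi.single i 1) (Pi.single i (1 : 𝕜)) := by
    ext j k
    simp only [vecMulVec_apply, diagonal_apply, Function.comp_apply, Pi.single_apply]
    split_ifs <;> simp_all
  refine ⟨hA.1.eigenvectorBasis i, ?_⟩
  conv_lhs => rw [hA.1.spectral_theorem, hi, hdiag]
  rw [Unitary.conjStarAlgAut_apply, mul_vecMulVec, vecMulVec_mul, ← hA.1.eigenvectorUnitary_mulVec,
    star_mulVec]
  simp [star_eq_conjTranspose]

theorem star_dotProduct_eq_ite_of_sum_vecMulVec_eq_one [DecidableEq n] {v : n → n → 𝕜}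
    (h : ∑ i, vecMulVec (v i) (star (v i)) = 1) (i j : n) :
    star (v i) ⬝ᵥ v j = if i = j then 1 else 0 := by
  set V : Matrix n n 𝕜 := (of v)ᵀ
  have hV : V * Vᴴ = 1 := by
    rw [← h]
    ext k l
    simp [V, mul_apply, Matrix.sum_apply, vecMulVec_apply]
  rw [← one_apply, ← mul_eq_one_comm.mp hV]
  simp [V, mul_apply, dotProduct]

theorem one_le_trace_of_trace_mul_eq_one [DecidableEq n] (hρ : ρ.PosSemidef)
    (hρ1 : ρ.trace = 1) (hA : A.PosSemidef) (h : (ρ * A).trace = 1) : 1 ≤ A.trace := by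
  have := hρ.posSemidef_trace_smul_one_sub.trace_mul_nonneg hA
  rwa [hρ1, one_smul, Matrix.sub_mul, Matrix.one_mul, trace_sub, h, sub_nonneg] at this

theorem exists_eq_vecMulVec_of_trace_mul_eq_one [DecidableEq n] (hρ : ρ.PosSemidef)
    (hρ1 : ρ.trace = 1) (hA : A.PosSemidef) (hA1 : (1 - A).PosSemidef) (hAtr : A.trace = 1)
    (h : (ρ * A).trace = 1) : ∃ v, ρ = vecMulVec v (star v) ∧ A = vecMulVec v (star v) := by
  have hA_eq : A = ρ * A := by
    have := hρ.posSemidef_trace_smul_one_sub.mul_eq_zero_of_trace_mul_eq_zero_s13 hA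
      (by rw [hρ1, one_smul, Matrix.sub_mul, Matrix.one_mul, trace_sub, h, hAtr, sub_self])
    rwa [hρ1, one_smul, Matrix.sub_mul, Matrix.one_mul, sub_eq_zero] at this
  have hρ_eq : ρ = ρ * A := by
    have := hρ.mul_eq_zero_of_trace_mul_eq_zero_s13 hA1
      (by rw [Matrix.mul_sub, Matrix.mul_one, trace_sub, hρ1, h, sub_self])
    rwa [Matrix.mul_sub, Matrix.mul_one, sub_eq_zero] at this
  have hρA : ρ = A := hρ_eq.trans hA_eq.symm
  obtain ⟨v, hv⟩ := hρ.exists_eq_vecMulVec_of_mul_self_eq_self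
    (by nth_rewrite 2 [hρA]; exact hρ_eq.symm) hρ1
  exact ⟨v, hv, hρA ▸ hv⟩

end Matrix

open scoped MatrixOrder in
theorem IsPOVM.posSemidef_one_sub {d Z : ℕ} {E : Fin Z → Matrix (Fin d) (Fin d) ℂ}
    (hE : IsPOVM E) (z : Fin Z) : (1 - E z).PosSemidef := by
  rw [← hE.2, ← Matrix.le_iff]
  exact Finset.single_le_sum (fun i _ => (hE.1 i).nonneg) (Finset.mem_univ z)

theorem IsPOVM.trace_eq_one_of_trace_mul_eq_one {d : ℕ} {ρ E : Fin d → Matrix (Fin d) (Fin d) ℂ}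
    (hρ : ∀ z, IsState (ρ z)) (hE : IsPOVM E) (h : ∀ z, (ρ z * E z).trace = 1) (z : Fin d) :
    (E z).trace = 1 := by
  have hsum : ∑ _z : Fin d, (1 : ℂ) = ∑ z, (E z).trace := by
    rw [← trace_sum, hE.2, trace_one]
    simp
  have hle : ∀ z ∈ Finset.univ, (1 : ℂ) ≤ (E z).trace := fun z _ =>
    one_le_trace_of_trace_mul_eq_one (hρ z).1 (hρ z).2 (hE.1 z) (h z)
  exact ((Finset.sum_eq_sum_iff_of_le hle).mp hsum z (Finset.mem_univ z)).symm

theorem stmt13 {Z : ℕ} (ρ : Fin Z → Matrix (Fin Z) (Fin Z) ℂ)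
    (hρ : ∀ z, IsState (ρ z))
    (E : Fin Z → Matrix (Fin Z) (Fin Z) ℂ) (hE : IsPOVM E)
    (h : ∀ z, (ρ z * E z).trace = 1) :
    ∃ ψ : Fin Z → (Fin Z → ℂ),
      (∀ z z', (∑ k, (starRingEnd ℂ) (ψ z k) * ψ z' k) = if z = z' then 1 else 0) ∧
      ∀ z, ρ z = outer (ψ z) ∧ E z = outer (ψ z) := by
  choose ψ hρψ hEψ using fun z => exists_eq_vecMulVec_of_trace_mul_eq_one (hρ z).1 (hρ z).2
    (hE.1 z) (hE.posSemidef_one_sub z) (hE.trace_eq_one_of_trace_mul_eq_one hρ h z) (h z)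
  refine ⟨ψ, star_dotProduct_eq_ite_of_sum_vecMulVec_eq_one ?_, fun z => ⟨hρψ z, hEψ z⟩⟩
  rw [← hE.2]
  exact Finset.sum_congr rfl fun z _ => (hEψ z).symm
end

section
/- Let ℰ be a linear map from d×d complex matrices to d×d complex matrices that maps every positive semidefinite matrix to a positive semidefinite matrix. Let (η_1,...,η_d) and (μ_1,...,μ_d) be orthonormal bases of ℂ^d, and suppose that ⟨η_z, ℰ(μ_{z'} μ_{z'}*) η_z⟩ = δ_{z,z'} for all z, z' ∈ {1,...,d}. Then ℰ(μ_z μ_z*) = η_z η_z* for all z ∈ {1,...,d}. -/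
/-!
`A := ℰ(μ_z μ_z*)` is positive semidefinite, so `⟨η_i, A η_i⟩ = 0` puts `η_i` in the kernel
of `A` for `i ≠ z`. As `A` is Hermitian, `A η_z` is then orthogonal to every `η_i` with `i ≠ z`, and
`⟨η_z, A η_z⟩ = 1` gives `A η_z = η_z`. Hence `A` and `η_z η_z*` agree on the basis `η`.
-/

open Matrix
open scoped ComplexOrder

theorem outer_eq_vecMulVec {d : ℕ} (ψ : Fin d → ℂ) : outer ψ = vecMulVec ψ (star ψ) := rfl

section Orthonormal

variable {R n : Type*} [CommRing R] [StarRing R] [Fintype n]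

theorem Matrix.IsHermitian.star_dotProduct_mulVec {A : Matrix n n R} (hA : A.IsHermitian)
    (x y : n → R) : star x ⬝ᵥ A *ᵥ y = star (A *ᵥ x) ⬝ᵥ y := by
  rw [star_mulVec, ← dotProduct_mulVec, hA.eq]

variable [DecidableEq n]

theorem Matrix.conjTranspose_mul_self_of_orthonormal {v : n → n → R}
    (hv : ∀ i j, star (v i) ⬝ᵥ v j = if i = j then 1 else 0) :
    ((of v)ᵀ)ᴴ * (of v)ᵀ = 1 := by
  ext i j
  simpa [mul_apply, one_apply, dotProduct] using hv i j

theorem Matrix.mul_conjTranspose_self_of_orthonormal {v : n → n → R}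
    (hv : ∀ i j, star (v i) ⬝ᵥ v j = if i = j then 1 else 0) :
    (of v)ᵀ * ((of v)ᵀ)ᴴ = 1 :=
  mul_eq_one_comm.mp (conjTranspose_mul_self_of_orthonormal hv)

theorem Matrix.eq_of_forall_star_dotProduct_eq {v : n → n → R}
    (hv : ∀ i j, star (v i) ⬝ᵥ v j = if i = j then 1 else 0) {x y : n → R}
    (h : ∀ i, star (v i) ⬝ᵥ x = star (v i) ⬝ᵥ y) : x = y := by
  have hcoord : ((of v)ᵀ)ᴴ *ᵥ x = ((of v)ᵀ)ᴴ *ᵥ y := funext h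
  calc x = ((of v)ᵀ * ((of v)ᵀ)ᴴ) *ᵥ x := by
        rw [mul_conjTranspose_self_of_orthonormal hv, one_mulVec]
    _ = ((of v)ᵀ * ((of v)ᵀ)ᴴ) *ᵥ y := by rw [← mulVec_mulVec, hcoord, mulVec_mulVec]
    _ = y := by rw [mul_conjTranspose_self_of_orthonormal hv, one_mulVec]

theorem Matrix.ext_of_forall_mulVec_eq {v : n → n → R}
    (hv : ∀ i j, star (v i) ⬝ᵥ v j = if i = j then 1 else 0) {A B : Matrix n n R}
    (h : ∀ j, A *ᵥ v j = B *ᵥ v j) : A = B := by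
  have hcols : A * (of v)ᵀ = B * (of v)ᵀ := by
    ext k j
    exact congrFun (h j) k
  calc A = A * (of v)ᵀ * ((of v)ᵀ)ᴴ := by
        rw [Matrix.mul_assoc, mul_conjTranspose_self_of_orthonormal hv, Matrix.mul_one]
    _ = B := by
        rw [hcols, Matrix.mul_assoc, mul_conjTranspose_self_of_orthonormal hv, Matrix.mul_one]

end Orthonormal

theorem eq_vecMulVec_self_star_of_posSemidef {𝕜 n : Type*} [RCLike 𝕜] [Fintype n]
    [DecidableEq n] {A : Matrix n n 𝕜} (hA : A.PosSemidef) {η : n → n → 𝕜}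
    (hη : ∀ i j, star (η i) ⬝ᵥ η j = if i = j then 1 else 0) (z : n)
    (hdiag : ∀ i, star (η i) ⬝ᵥ A *ᵥ η i = if i = z then 1 else 0) :
    A = vecMulVec (η z) (star (η z)) := by
  have hker : ∀ i, i ≠ z → A *ᵥ η i = 0 := fun i hi =>
    (hA.dotProduct_mulVec_zero_iff _).mp (by rw [hdiag, if_neg hi])
  have hfixed : A *ᵥ η z = η z := by
    refine eq_of_forall_star_dotProduct_eq hη fun i => ?_
    by_cases hi : i = z
    · rw [hi, hdiag, hη]
    · rw [hA.isHermitian.star_dotProduct_mulVec, hker i hi, hη, if_neg hi, star_zero,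
        zero_dotProduct]
  refine ext_of_forall_mulVec_eq hη fun j => ?_
  rw [vecMulVec_mulVec, hη]
  by_cases hj : j = z
  · simp [hj, hfixed]
  · simp [hker j hj, Ne.symm hj]

theorem stmt14_general {d : ℕ}
    (ℰ : Matrix (Fin d) (Fin d) ℂ →ₗ[ℂ] Matrix (Fin d) (Fin d) ℂ)
    (hpos : ∀ A : Matrix (Fin d) (Fin d) ℂ, A.PosSemidef → (ℰ A).PosSemidef)
    (η μ : Fin d → Fin d → ℂ)
    (hη : ∀ z z', (∑ k, (starRingEnd ℂ) (η z k) * η z' k) = if z = z' then 1 else 0)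
    (h : ∀ z z', (∑ k, (starRingEnd ℂ) (η z k) * ((ℰ (outer (μ z'))) *ᵥ η z) k) =
      if z = z' then 1 else 0) :
    ∀ z, ℰ (outer (μ z)) = outer (η z) := by
  intro z
  rw [outer_eq_vecMulVec (η z)]
  exact eq_vecMulVec_self_star_of_posSemidef
    (hpos _ (outer_eq_vecMulVec (μ z) ▸ posSemidef_vecMulVec_self_star _)) hη z fun i => h i z

theorem stmt14 {d : ℕ}
    (ℰ : Matrix (Fin d) (Fin d) ℂ →ₗ[ℂ] Matrix (Fin d) (Fin d) ℂ)
    (hpos : ∀ A : Matrix (Fin d) (Fin d) ℂ, A.PosSemidef → (ℰ A).PosSemidef)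
    (η μ : Fin d → Fin d → ℂ)
    (hη : ∀ z z', (∑ k, (starRingEnd ℂ) (η z k) * η z' k) = if z = z' then 1 else 0)
    (hμ : ∀ z z', (∑ k, (starRingEnd ℂ) (μ z k) * μ z' k) = if z = z' then 1 else 0)
    (h : ∀ z z', (∑ k, (starRingEnd ℂ) (η z k) * ((ℰ (outer (μ z'))) *ᵥ η z) k) =
      if z = z' then 1 else 0) :
    ∀ z, ℰ (outer (μ z)) = outer (η z) :=
  stmt14_general ℰ hpos η μ hη h
end
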